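/- For any permutation σ of {1,…,n}, any integers 0 ≤ k1 < k2 and any 0 ≤ m ≤ n, S(σ^{+(k1,m,k2)}) = (S(σ))^{+(k1,m,k2)}. -/

import Mathlib

namespace TSP

theorem foldr_max_mem {α : Type} [LinearOrder α] (x : α) (l : List α) :
    l.foldr max x ∈ x :: l := by
  induction l with
  | nil => simp
  | cons a t ih =>
    simp only [List.foldr_cons]
    rcases max_choice a (t.foldr max x) with h | h <;> rw [h]
    · simp
    · rcases List.mem_cons.mp ih with h' | h'
      · rw [h']; simp
      · exact List.mem_cons.mpr (Or.inr (List.mem_cons.mpr (Or.inr h')))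

theorem length_takeWhile_lt {α : Type} [DecidableEq α] {m : α} {l : List α}
    (h : m ∈ l) : (l.takeWhile (· ≠ m)).length < l.length := by
  have hd : l.dropWhile (· ≠ m) ≠ [] := by
    intro hnil
    have := List.dropWhile_eq_nil_iff.mp hnil m h
    simp at this
  have hsum : (l.takeWhile (· ≠ m)).length + (l.dropWhile (· ≠ m)).length = l.length := by
    rw [← List.length_append, List.takeWhile_append_dropWhile]
  have : 0 < (l.dropWhile (· ≠ m)).length := List.length_pos_iff.mpr hd
  omega

theorem length_tail_dropWhile_lt {α : Type} [DecidableEq α] {m : α} {l : List α}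
    (h : l ≠ []) : ((l.dropWhile (· ≠ m)).tail).length < l.length := by
  have hsum : (l.takeWhile (· ≠ m)).length + (l.dropWhile (· ≠ m)).length = l.length := by
    rw [← List.length_append, List.takeWhile_append_dropWhile]
  have h2 : ((l.dropWhile (· ≠ m)).tail).length = (l.dropWhile (· ≠ m)).length - 1 :=
    List.length_tail
  have : 0 < l.length := List.length_pos_iff.mpr h
  omega

/-- The stack-sorting operator `S`: `S(ε) = ε`, and if `A` is nonempty with
largest element `m` and `A = A_L · (m) · A_R`, then `S(A) = S(A_L) · S(A_R) · (m)`. -/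
def S {α : Type} [LinearOrder α] : List α → List α
  | [] => []
  | x :: l =>
    let m := l.foldr max x
    S ((x :: l).takeWhile (· ≠ m)) ++ S (((x :: l).dropWhile (· ≠ m)).tail) ++ [m]
termination_by l => l.length
decreasing_by
  · first
    | exact length_takeWhile_lt (foldr_max_mem x l)
    | (simp only [List.foldr_attach]; exact length_takeWhile_lt (foldr_max_mem x l))
  · exact length_tail_dropWhile_lt (by simp)

/-- The identity permutation `id_n = (1, 2, …, n)` as a list. -/
def idPerm (n : ℕ) : List ℕ := List.range' 1 n

/-- `l` is a permutation of `{1, …, n}` (viewed as a sequence). -/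
def IsPermOf (n : ℕ) (l : List ℕ) : Prop := l.Perm (idPerm n)

/-- `l` is a two-stack sortable permutation (of `{1, …, len l}`). -/
def Is2SS (l : List ℕ) : Prop := IsPermOf l.length l ∧ S (S l) = idPerm l.length

/-- `σ^{+k}`: add `k` to every entry. -/
def shift (k : ℕ) (l : List ℕ) : List ℕ := l.map (· + k)

/-- `σ^{+(k1,m,k2)}`: add `k1` to every entry strictly smaller than `m`, `k2` to the others. -/
def shift3 (k1 m k2 : ℕ) (l : List ℕ) : List ℕ :=
  l.map (fun a => if a < m then a + k1 else a + k2)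

/-- Standardization `P(A)`: the permutation of `{1,…,len A}` in the same relative order. -/
def stand (l : List ℕ) : List ℕ := l.map (fun a => (l.filter (fun b => b ≤ a)).length)

/-- Avoidance of the pattern 231: no positions `i < j < k` with `l(k) < l(i) < l(j)`. -/
def Avoids231 (l : List ℕ) : Prop :=
  ¬ ∃ i j k, i < j ∧ j < k ∧ k < l.length ∧
      l.getD k 0 < l.getD i 0 ∧ l.getD i 0 < l.getD j 0

/-- The list of values of the left-to-right maxima of `l`, in order. -/
def lrMaxima (l : List ℕ) : List ℕ :=
  ((List.range l.length).filter
    (fun i => (l.take i).all (fun b => b < l.getD i 0))).map (fun i => l.getD i 0)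

/-- `lmax`: the number of left-to-right maxima. -/
def lmax (l : List ℕ) : ℕ :=
  (List.range l.length).countP (fun i => (l.take i).all (fun b => b < l.getD i 0))

/-- `rmax`: the number of right-to-left maxima. -/
def rmax (l : List ℕ) : ℕ :=
  (List.range l.length).countP (fun i => (l.drop (i+1)).all (fun b => b < l.getD i 0))

/-- `asc`: the number of ascents. -/
def asc (l : List ℕ) : ℕ :=
  (List.range (l.length - 1)).countP (fun i => l.getD i 0 < l.getD (i+1) 0)

/-- `des`: the number of descents. -/
def des (l : List ℕ) : ℕ :=
  (List.range (l.length - 1)).countP (fun i => l.getD (i+1) 0 < l.getD i 0)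

/-- `slmax(π)`: the number of left-to-right maxima of `S(π)`. -/
def slmax (l : List ℕ) : ℕ := lmax (S l)

/-- `sldes(π)`: the number of entries `a` that precede `a - 1` in `S(π)`. -/
def sldes (l : List ℕ) : ℕ :=
  (List.range (S l).length).countP
    (fun i => ((S l).drop (i+1)).any (fun b => b + 1 = (S l).getD i 0))

/-- The construction `C1(π1, π2) = π1 · (k+ℓ+1) · π2^{+k}`. -/
def C1 (p1 p2 : List ℕ) : List ℕ :=
  p1 ++ (p1.length + p2.length + 1) :: shift p1.length p2

/-- The `i`-th left-to-right maximum `a_i` of `S(π2)` (1-indexed). -/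
def lrm (p2 : List ℕ) (i : ℕ) : ℕ := (lrMaxima (S p2)).getD (i - 1) 0

/-- The construction `C2(π1, π2, i) = π1^{+(0,k,a_i)} · (k+ℓ+1) · π2^{+(k-1,a_i+1,k)}`. -/
def C2 (p1 p2 : List ℕ) (i : ℕ) : List ℕ :=
  shift3 0 p1.length (lrm p2 i) p1 ++
    (p1.length + p2.length + 1) :: shift3 (p1.length - 1) (lrm p2 i + 1) p1.length p2

/-- The decomposition `D(π) = (P(π_ℓ), P(π_r))`, where `π = π_ℓ · (n) · π_r`
with `n` the largest entry of `π`. -/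
def D (l : List ℕ) : List ℕ × List ℕ :=
  match l with
  | [] => ([], [])
  | x :: t =>
    let m := t.foldr max x
    (stand ((x :: t).takeWhile (· ≠ m)), stand (((x :: t).dropWhile (· ≠ m)).tail))

theorem S_cons {α : Type} [LinearOrder α] (x : α) (l : List α) :
    S (x :: l) = S ((x :: l).takeWhile (· ≠ l.foldr max x)) ++
      S (((x :: l).dropWhile (· ≠ l.foldr max x)).tail) ++ [l.foldr max x] := by
  rw [S]

section StrictMono

variable {α β : Type} [LinearOrder α] [LinearOrder β] {f : α → β}

theorem foldr_max_map_of_monotone (hf : Monotone f) (x : α) (l : List α) :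
    (l.map f).foldr max (f x) = f (l.foldr max x) := by
  induction l with
  | nil => rfl
  | cons a t ih => simp only [List.map_cons, List.foldr_cons, ih, hf.map_max]

theorem takeWhile_map_ne_of_injective (hf : Function.Injective f) (m : α) (l : List α) :
    (l.map f).takeWhile (· ≠ f m) = (l.takeWhile (· ≠ m)).map f := by
  rw [List.takeWhile_map]
  congr 2
  funext a
  simp [hf.eq_iff]

theorem dropWhile_map_ne_of_injective (hf : Function.Injective f) (m : α) (l : List α) :
    (l.map f).dropWhile (· ≠ f m) = (l.dropWhile (· ≠ m)).map f := by
  rw [List.dropWhile_map]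
  congr 2
  funext a
  simp [hf.eq_iff]

theorem S_map_of_strictMono (hf : StrictMono f) : ∀ l : List α, S (l.map f) = (S l).map f
  | [] => by simp [S]
  | x :: t => by
    rw [List.map_cons, S_cons, S_cons, foldr_max_map_of_monotone hf.monotone, ← List.map_cons,
      takeWhile_map_ne_of_injective hf.injective, dropWhile_map_ne_of_injective hf.injective,
      ← List.map_tail, S_map_of_strictMono hf, S_map_of_strictMono hf]
    simp
termination_by l => l.length
decreasing_by
  · exact length_takeWhile_lt (foldr_max_mem x t)
  · exact length_tail_dropWhile_lt (by simp)

end StrictMono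

theorem strictMono_ite_add {k1 k2 : ℕ} (hk : k1 ≤ k2) (m : ℕ) :
    StrictMono (fun a : ℕ => if a < m then a + k1 else a + k2) := by
  intro a b hab
  dsimp only
  split_ifs <;> omega

theorem S_shift3_general (k1 k2 m : ℕ) (hk : k1 < k2) (σ : List ℕ) :
    S (shift3 k1 m k2 σ) = shift3 k1 m k2 (S σ) :=
  S_map_of_strictMono (strictMono_ite_add hk.le m) σ

/-- For any permutation `σ` of `{1,…,n}`, any `0 ≤ k1 < k2` and `0 ≤ m ≤ n`,
`S(σ^{+(k1,m,k2)}) = (S(σ))^{+(k1,m,k2)}`. -/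
theorem S_shift3 (n k1 k2 m : ℕ) (hk : k1 < k2) (hm : m ≤ n) (σ : List ℕ)
    (hσ : IsPermOf n σ) :
    S (shift3 k1 m k2 σ) = shift3 k1 m k2 (S σ) :=
  S_shift3_general k1 k2 m hk σ

end TSP
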